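/- (PI control of a port-Hamiltonian system: closed-loop dissipation.) Consider the port-Hamiltonian system ẋ = (𝒥 − ℛ)∇H(x) + Gu + d, y = Gᵀ∇H(x) (H : ℝⁿ → ℝ differentiable, 𝒥 = −𝒥ᵀ, ℛ = ℛᵀ positive semidefinite, G ∈ ℝ^{n×m}, d ∈ ℝⁿ constant) interconnected with the PI controller ζ̇ = e, y_c = K_P e + K_I ζ, where K_P, K_I ∈ ℝ^{m×m} are symmetric positive definite, through e = y − ȳ and u = −y_c. Let (x̄, ū, ζ̄) be a closed-loop equilibrium: (𝒥 − ℛ)∇H(x̄) + Gū + d = 0, ȳ = Gᵀ∇H(x̄), and ū = −K_I ζ̄. Then for all x ∈ ℝⁿ and ζ ∈ ℝᵐ, setting y = Gᵀ∇H(x), e = y − ȳ, u = −K_P e − K_I ζ: ⟨∇H(x) − ∇H(x̄), (𝒥 − ℛ)∇H(x) + Gu + d⟩ + ⟨K_I(ζ − ζ̄), e⟩ ≤ −(y − ȳ)ᵀK_P(y − ȳ). -/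

import Mathlib

/-!
Subtracting the equilibrium equation, the closed-loop vector field becomes
`(𝒥 − ℛ)Δ + G(u − ū)` with `Δ = ∇H(x) − ∇H(x̄)`. Since `𝒥` is skew and `ℛ ⪰ 0`, this map is
passive from `u − ū` to `e = GᵀΔ`, and `u − ū = −K_P e − K_I(ζ − ζ̄)`: the integral part cancels
the controller term exactly, leaving `−eᵀK_P e`.
-/
open Matrix

theorem dotProduct_mulVec_self_eq_zero_of_transpose_eq_neg {ι R : Type*} [Fintype ι]
    [CommRing R] [IsAddTorsionFree R] {A : Matrix ι ι R} (hA : Aᵀ = -A)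
    (v : ι → R) : v ⬝ᵥ A *ᵥ v = 0 := by
  refine neg_eq_self.mp ?_
  calc -(v ⬝ᵥ A *ᵥ v) = v ⬝ᵥ Aᵀ *ᵥ v := by rw [hA, neg_mulVec, dotProduct_neg]
    _ = v ⬝ᵥ A *ᵥ v := by rw [mulVec_transpose, dotProduct_comm, dotProduct_mulVec]

theorem dotProduct_sub_mulVec_add_mulVec_le {ι κ R : Type*} [Fintype ι] [Fintype κ]
    [CommRing R] [PartialOrder R] [IsOrderedAddMonoid R] [StarRing R] [TrivialStar R]
    [IsAddTorsionFree R]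
    {J D : Matrix ι ι R} (hJ : Jᵀ = -J) (hD : D.PosSemidef) (G : Matrix ι κ R)
    (v : ι → R) (w : κ → R) :
    v ⬝ᵥ ((J - D) *ᵥ v + G *ᵥ w) ≤ (Gᵀ *ᵥ v) ⬝ᵥ w := by
  have hDv : 0 ≤ v ⬝ᵥ D *ᵥ v := by simpa using hD.dotProduct_mulVec_nonneg v
  rw [dotProduct_add, sub_mulVec, dotProduct_sub,
    dotProduct_mulVec_self_eq_zero_of_transpose_eq_neg hJ, dotProduct_mulVec v G,
    ← mulVec_transpose, zero_sub, neg_add_le_iff_le_add]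
  exact le_add_of_nonneg_left hDv

theorem port_hamiltonian_pi_dissipation_general {n m : ℕ}
    (gradH : (Fin n → ℝ) → (Fin n → ℝ))
    (Jc Rc : Matrix (Fin n) (Fin n) ℝ)
    (hJ : Jcᵀ = -Jc) (hR : Rc.PosSemidef)
    (G : Matrix (Fin n) (Fin m) ℝ) (d : Fin n → ℝ)
    (KP KI : Matrix (Fin m) (Fin m) ℝ)
    (xbar : Fin n → ℝ) (ubar zbar : Fin m → ℝ)
    (heq : (Jc - Rc).mulVec (gradH xbar) + G.mulVec ubar + d = 0)
    (hub : ubar = -(KI.mulVec zbar)) :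
    ∀ (x : Fin n → ℝ) (z : Fin m → ℝ),
      let ybar := Gᵀ.mulVec (gradH xbar)
      let y := Gᵀ.mulVec (gradH x)
      let e := y - ybar
      let u := -(KP.mulVec e + KI.mulVec z)
      (gradH x - gradH xbar) ⬝ᵥ ((Jc - Rc).mulVec (gradH x) + G.mulVec u + d)
        + (KI.mulVec (z - zbar)) ⬝ᵥ e
      ≤ -((y - ybar) ⬝ᵥ KP.mulVec (y - ybar)) := by
  intro x z ybar y e u
  have he : e = Gᵀ *ᵥ (gradH x - gradH xbar) := (mulVec_sub _ _ _).symm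
  have hflow : (Jc - Rc) *ᵥ gradH x + G *ᵥ u + d
      = (Jc - Rc) *ᵥ (gradH x - gradH xbar) + G *ᵥ (u - ubar) := by
    rw [← sub_zero ((Jc - Rc) *ᵥ gradH x + G *ᵥ u + d), ← heq, mulVec_sub, mulVec_sub]
    abel
  have hu : u - ubar = -(KP *ᵥ e) - KI *ᵥ (z - zbar) := by
    rw [show u = -(KP *ᵥ e + KI *ᵥ z) from rfl, hub, mulVec_sub KI]
    abel
  calc _ = (gradH x - gradH xbar) ⬝ᵥ ((Jc - Rc) *ᵥ (gradH x - gradH xbar) + G *ᵥ (u - ubar))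
          + KI *ᵥ (z - zbar) ⬝ᵥ e := by rw [hflow]
    _ ≤ e ⬝ᵥ (u - ubar) + KI *ᵥ (z - zbar) ⬝ᵥ e := by
      rw [he]
      exact add_le_add_left (dotProduct_sub_mulVec_add_mulVec_le hJ hR G _ _) _
    _ = -(e ⬝ᵥ KP *ᵥ e) := by
      rw [hu, dotProduct_sub, dotProduct_neg, dotProduct_comm (KI *ᵥ _)]
      exact sub_add_cancel _ _

/-- **PI control of a port-Hamiltonian system: closed-loop dissipation.** For the
port-Hamiltonian plant `ẋ = (𝒥 − ℛ)∇H(x) + Gu + d`, `y = Gᵀ∇H(x)` in feedback with the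
PI controller `ζ̇ = e`, `y_c = K_P e + K_I ζ`, `e = y − ȳ`, `u = −y_c`, the sum of the
time derivatives of the Bregman plant storage and of the controller storage
`½(ζ−ζ̄)ᵀK_I(ζ−ζ̄)` is bounded by `−(y−ȳ)ᵀK_P(y−ȳ)`. -/
theorem port_hamiltonian_pi_dissipation {n m : ℕ}
    (H : (Fin n → ℝ) → ℝ) (gradH : (Fin n → ℝ) → (Fin n → ℝ))
    (hdiff : Differentiable ℝ H)
    (hgrad : ∀ x v, (fderiv ℝ H x) v = gradH x ⬝ᵥ v)
    (Jc Rc : Matrix (Fin n) (Fin n) ℝ)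
    (hJ : Jcᵀ = -Jc) (hR : Rc.PosSemidef)
    (G : Matrix (Fin n) (Fin m) ℝ) (d : Fin n → ℝ)
    (KP KI : Matrix (Fin m) (Fin m) ℝ) (hKP : KP.PosDef) (hKI : KI.PosDef)
    (xbar : Fin n → ℝ) (ubar zbar : Fin m → ℝ)
    (heq : (Jc - Rc).mulVec (gradH xbar) + G.mulVec ubar + d = 0)
    (hub : ubar = -(KI.mulVec zbar)) :
    ∀ (x : Fin n → ℝ) (z : Fin m → ℝ),
      let ybar := Gᵀ.mulVec (gradH xbar)
      let y := Gᵀ.mulVec (gradH x)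
      let e := y - ybar
      let u := -(KP.mulVec e + KI.mulVec z)
      (gradH x - gradH xbar) ⬝ᵥ ((Jc - Rc).mulVec (gradH x) + G.mulVec u + d)
        + (KI.mulVec (z - zbar)) ⬝ᵥ e
      ≤ -((y - ybar) ⬝ᵥ KP.mulVec (y - ybar)) :=
  port_hamiltonian_pi_dissipation_general gradH Jc Rc hJ hR G d KP KI xbar ubar zbar heq hub
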